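/- arXiv:2504.15251 — 3 statements merged into one kernel-verified Lean document; each statement's English description precedes it below -/
import Mathlib

section
/- Let A be a probability distribution on points μ₁,…,μ_k ⊂ ℝ with weights w₁,…,w_k, and let p(x) = ∏_{i=1}^{k'}(x−μᵢ)² . Suppose E_{x~A}[p(x)] ≥ ‖p‖₁/2 and E_{x~A}[p(x)²] ≤ 2‖p‖₂², where ‖p‖_r denotes the L_r norm under N(0,1), and suppose ‖p‖₁ ≥ 3^{-2k'}‖p‖₂. Then the total weight of the points with index greater than k' satisfies Σ_{i=k'+1}^{k} wᵢ ≥ (1/8)·9^{-2k'}. -/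
/-!
Since `p` vanishes at `μ₁, …, μ_{k'}`, Cauchy–Schwarz restricted to the remaining points gives
`E_A[p]² ≤ (∑_{i > k'} wᵢ) · E_A[p²]`. The hypotheses bound the left side below by
`(3^(-2k') ‖p‖₂ / 2)²` and `E_A[p²]` above by `2 ‖p‖₂²`; dividing by `‖p‖₂² > 0` (a nonzero
polynomial has a positive Gaussian `L²` norm) leaves `9^(-2k') / 8`.
-/

open MeasureTheory ProbabilityTheory Polynomial

theorem Polynomial.integrable_eval_of_integrable_pow {μ : Measure ℝ}
    (hμ : ∀ n : ℕ, Integrable (fun x => x ^ n) μ) (q : ℝ[X]) :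
    Integrable (fun x => q.eval x) μ := by
  simp_rw [eval_eq_sum_range]
  exact integrable_finsetSum _ fun n _ => (hμ n).const_mul _

theorem integrable_pow_gaussianReal (m : ℝ) (v : NNReal) (n : ℕ) :
    Integrable (fun x => x ^ n) (gaussianReal m v) :=
  integrable_pow_of_mem_interior_integrableExpSet (X := id)
    (by simp [integrableExpSet_id_gaussianReal]) n

theorem integral_pos_of_countable_zeros {α : Type*} [MeasurableSpace α] {μ : Measure α}
    [NullSingletonClass μ] [NeZero μ] {f : α → ℝ} (hf : 0 ≤ f) (hfi : Integrable f μ)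
    (hzero : {x | f x = 0}.Countable) : 0 < ∫ x, f x ∂μ := by
  rw [integral_pos_iff_support_of_nonneg hf hfi, pos_iff_ne_zero]
  intro hsupp
  have huniv : μ Set.univ ≤ 0 := calc
    μ Set.univ ≤ μ (Function.support f) + μ (Function.support f)ᶜ := measure_univ_le_add_compl _
    _ = 0 := by rw [hsupp, Function.compl_support, hzero.measure_zero, add_zero]
  exact NeZero.ne μ (Measure.measure_univ_eq_zero.mp (nonpos_iff_eq_zero.mp huniv))

theorem integral_sq_prod_sub_sq_gaussianReal_pos {ι : Type*} [Fintype ι] (c : ι → ℝ) (m : ℝ)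
    {v : NNReal} (hv : v ≠ 0) :
    0 < ∫ x, (∏ i, (x - c i) ^ 2) ^ 2 ∂(gaussianReal m v) := by
  have := nullSingletonClass_gaussianReal (μ := m) hv
  have hint : Integrable (fun x => (∏ i, (x - c i) ^ 2) ^ 2) (gaussianReal m v) := by
    convert integrable_eval_of_integrable_pow (integrable_pow_gaussianReal m v)
      ((∏ i, (X - C (c i)) ^ 2) ^ 2) using 2 with x
    simp [eval_prod]
  refine integral_pos_of_countable_zeros (fun x => sq_nonneg _) hint
    ((Set.finite_range c).subset ?_).countable
  intro x hx
  obtain ⟨i, -, hi⟩ := Finset.prod_eq_zero_iff.mp ((pow_eq_zero_iff two_ne_zero).mp hx)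
  exact ⟨i, (sub_eq_zero.mp ((pow_eq_zero_iff two_ne_zero).mp hi)).symm⟩

theorem Finset.sq_sum_mul_le_sum_filter_mul_sum {ι : Type*} (s : Finset ι) (P : ι → Prop)
    [DecidablePred P] {w f : ι → ℝ} (hw : ∀ i ∈ s, 0 ≤ w i) (hf : ∀ i ∈ s, ¬ P i → f i = 0) :
    (∑ i ∈ s, w i * f i) ^ 2 ≤ (∑ i ∈ s with P i, w i) * ∑ i ∈ s, w i * f i ^ 2 := by
  have hfilter : ∑ i ∈ s with P i, w i * f i = ∑ i ∈ s, w i * f i :=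
    sum_filter_of_ne fun i hi hne => by_contra fun hP => hne (by rw [hf i hi hP, mul_zero])
  calc (∑ i ∈ s, w i * f i) ^ 2 = (∑ i ∈ s with P i, w i * f i) ^ 2 := by rw [hfilter]
    _ ≤ (∑ i ∈ s with P i, w i) * ∑ i ∈ s with P i, w i * f i ^ 2 :=
      sum_sq_le_sum_mul_sum_of_sq_le_mul _ (fun i hi => hw i (mem_filter.mp hi).1)
        (fun i hi => mul_nonneg (hw i (mem_filter.mp hi).1) (sq_nonneg _))
        fun i _ => le_of_eq (by ring)
    _ ≤ (∑ i ∈ s with P i, w i) * ∑ i ∈ s, w i * f i ^ 2 :=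
      mul_le_mul_of_nonneg_left
        (sum_le_sum_of_subset_of_nonneg (filter_subset P s)
          fun i hi _ => mul_nonneg (hw i hi) (sq_nonneg _))
        (sum_nonneg fun i hi => hw i (mem_filter.mp hi).1)

theorem equal_weight_mass_lower_bound_general (k k' : ℕ) (hk : k' ≤ k)
    (μ : Fin k → ℝ) (w : Fin k → ℝ)
    (hwnn : ∀ i, 0 ≤ w i) :
    let p : ℝ → ℝ := fun x => ∏ i : Fin k', (x - μ (Fin.castLE hk i)) ^ 2
    let N1 := ∫ x, |p x| ∂(gaussianReal 0 1)
    let N2 := (∫ x, (p x) ^ 2 ∂(gaussianReal 0 1)) ^ ((1:ℝ)/2)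
    N1 / 2 ≤ ∑ i, w i * p (μ i) →
    ∑ i, w i * (p (μ i)) ^ 2 ≤ 2 * N2 ^ 2 →
    (3:ℝ) ^ (-(2 * k' : ℝ)) * N2 ≤ N1 →
    (1/8) * (9:ℝ) ^ (-(2 * k' : ℝ)) ≤
      ∑ i ∈ Finset.univ.filter (fun i : Fin k => k' ≤ (i : ℕ)), w i := by
  intro p N1 N2 hE hQ h3
  have hN2 : 0 < N2 := Real.rpow_pos_of_pos
    (integral_sq_prod_sub_sq_gaussianReal_pos (fun i : Fin k' => μ (Fin.castLE hk i)) 0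
      one_ne_zero) _
  have hCS := Finset.sq_sum_mul_le_sum_filter_mul_sum Finset.univ (fun i : Fin k => k' ≤ (i : ℕ))
    (f := fun i => p (μ i)) (fun i _ => hwnn i) fun i _ hi =>
      Finset.prod_eq_zero (Finset.mem_univ ⟨i, by omega⟩) (by simp [Fin.castLE])
  set a := (3:ℝ) ^ (-(2 * k' : ℝ))
  set W := ∑ i ∈ Finset.univ.filter (fun i : Fin k => k' ≤ (i : ℕ)), w i
  have h9 : (9:ℝ) ^ (-(2 * k' : ℝ)) = a * a := by
    rw [← Real.mul_rpow (by norm_num) (by norm_num)]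
    norm_num
  have hW : (a * N2 / 2) ^ 2 ≤ W * (2 * N2 ^ 2) := calc
    (a * N2 / 2) ^ 2 ≤ (∑ i, w i * p (μ i)) ^ 2 :=
      pow_le_pow_left₀ (by positivity) (by linarith) 2
    _ ≤ W * ∑ i, w i * p (μ i) ^ 2 := hCS
    _ ≤ W * (2 * N2 ^ 2) := mul_le_mul_of_nonneg_left hQ (Finset.sum_nonneg fun i _ => hwnn i)
  rw [h9]
  exact le_of_mul_le_mul_right (by nlinarith) (pow_pos hN2 2)

/-- If `p(x) = ∏_{i≤k'} (x-μᵢ)²`, `E_A[p] ≥ ‖p‖₁/2`, `E_A[p²] ≤ 2‖p‖₂²` and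
`‖p‖₁ ≥ 3^(-2k') ‖p‖₂`, then the total weight of points of index `> k'` is at least
`(1/8)·9^(-2k')`. -/
theorem equal_weight_mass_lower_bound (k k' : ℕ) (hk : k' ≤ k)
    (μ : Fin k → ℝ) (w : Fin k → ℝ)
    (hwnn : ∀ i, 0 ≤ w i) (hsum : ∑ i, w i = 1) :
    let p : ℝ → ℝ := fun x => ∏ i : Fin k', (x - μ (Fin.castLE hk i)) ^ 2
    let N1 := ∫ x, |p x| ∂(gaussianReal 0 1)
    let N2 := (∫ x, (p x) ^ 2 ∂(gaussianReal 0 1)) ^ ((1:ℝ)/2)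
    N1 / 2 ≤ ∑ i, w i * p (μ i) →
    ∑ i, w i * (p (μ i)) ^ 2 ≤ 2 * N2 ^ 2 →
    (3:ℝ) ^ (-(2 * k' : ℝ)) * N2 ≤ N1 →
    (1/8) * (9:ℝ) ^ (-(2 * k' : ℝ)) ≤
      ∑ i ∈ Finset.univ.filter (fun i : Fin k => k' ≤ (i : ℕ)), w i :=
  equal_weight_mass_lower_bound_general k k' hk μ w hwnn
end

section
/- Let p(x) = ∏_{i=1}^{k'}(x − μᵢ) with arbitrary μ₁,…,μ_{k'} ∈ ℝ, let t > 0, and let I = [0.9√(2t), 1.1√(2t)]. Then exp((1/|I|)∫_I ln|p(x)| dx) ≥ 2^{-Ck'} · max_{|y| ≤ √t} |p(y)| for some absolute constant C. -/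
/-!
The geometric mean of `|p|` is multiplicative over the linear factors of `p`, so it suffices to
compare the mean of `log |x - c|` over `[a, b]` with `log |y - c|` for a single root `c` and a
point `y` within distance `R` of `[a, b]`. If `c` is far from `y` (`|y - c| ≥ 2R`), then
`|x - c| ≥ |y - c| / 2` on the whole interval. If `c` is near, then `|y - c| < 2R`, and the
mean of `log |x - c|` over any window of length `h` is at least its value `log (h / 2) - 1` on
the window centred at the singularity. Either way the mean loses at most `log (4R / h) + 1`,
which for `[0.9L, 1.1L]` and `R = 2.1L` gives the factor `1 / (42e) ≥ 2⁻⁷` per root.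
-/

open MeasureTheory Real Set

theorem integral_log_centered_le_of_neg_half_le {h u : ℝ} (hh : 0 ≤ h) (hu : -(h / 2) ≤ u) :
    ∫ x in -(h / 2)..h / 2, log x ≤ ∫ x in u..u + h, log x := by
  -- moving the window from `-(h / 2)` to `u` trades `log x` for `log (x + h)` on `[-(h / 2), u]`,
  -- and there `|x| ≤ x + h`
  have hshift : ∫ x in -(h / 2)..u, log (x + h) = ∫ x in h / 2..u + h, log x := by
    rw [intervalIntegral.integral_comp_add_right]; ring_nf
  have hmono : ∫ x in -(h / 2)..u, log x ≤ ∫ x in -(h / 2)..u, log (x + h) := by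
    refine intervalIntegral.integral_mono_ae_restrict hu intervalIntegral.intervalIntegrable_log'
      (by simpa using (intervalIntegral.intervalIntegrable_log' (a := -(h / 2) + h)
        (b := u + h)).comp_add_right h) ?_
    filter_upwards [ae_restrict_of_ae (Measure.ae_ne volume 0), ae_restrict_mem measurableSet_Icc]
      with x hx0 hx
    rw [← log_abs x]
    exact log_le_log (abs_pos.2 hx0) (abs_le.2 ⟨by linarith [hx.1], by linarith [hx.1]⟩)
  simp only [integral_log] at hshift hmono ⊢
  linarith

theorem mul_log_half_sub_one_le_integral_log (h u : ℝ) (hh : 0 ≤ h) :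
    h * (log (h / 2) - 1) ≤ ∫ x in u..u + h, log x := by
  have hsymm : ∫ x in -(h / 2)..h / 2, log x = h * (log (h / 2) - 1) := by
    rw [integral_log, log_neg_eq_log]; ring
  rw [← hsymm]
  -- a window left of centre is the mirror image of one right of centre, as `log` is even
  rcases le_total (-(h / 2)) u with hu | hu
  · exact integral_log_centered_le_of_neg_half_le hh hu
  · have hrefl : ∫ x in u..u + h, log x = ∫ x in -(u + h)..-(u + h) + h, log x := by
      rw [show -(u + h) + h = -u by ring]
      simpa only [log_neg_eq_log] using
        intervalIntegral.integral_comp_neg (a := u) (b := u + h) log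
    rw [hrefl]
    exact integral_log_centered_le_of_neg_half_le hh (by linarith)

theorem intervalIntegrable_log_abs_sub (a b c : ℝ) :
    IntervalIntegrable (fun x => log |x - c|) volume a b := by
  simpa only [log_abs, sub_add_cancel] using
    (intervalIntegral.intervalIntegrable_log' (a := a - c) (b := b - c)).comp_sub_right c

theorem sub_le_two_mul_of_forall_abs_sub_le {a b R y : ℝ} (hab : a ≤ b)
    (hR : ∀ x ∈ Icc a b, |x - y| ≤ R) : b - a ≤ 2 * R := by
  have ha := hR a ⟨le_rfl, hab⟩
  have hb := hR b ⟨hab, le_rfl⟩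
  rw [abs_le] at ha hb
  linarith

theorem log_abs_sub_sub_le_average_log_abs_sub {a b R y c : ℝ} (hab : a < b)
    (hR : ∀ x ∈ Icc a b, |x - y| ≤ R) (hyc : y ≠ c) :
    log |y - c| - log (4 * R / (b - a)) - 1 ≤ (b - a)⁻¹ * ∫ x in a..b, log |x - c| := by
  have hh : 0 < b - a := sub_pos.2 hab
  have hhR := sub_le_two_mul_of_forall_abs_sub_le hab.le hR
  have hR0 : 0 < R := by linarith
  have hyc' : 0 < |y - c| := abs_pos.2 (sub_ne_zero.2 hyc)
  rw [le_inv_mul_iff₀ hh]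
  rcases le_total (2 * R) |y - c| with hfar | hnear
  · have hpt : ∀ x ∈ Icc a b, log |y - c| - log 2 ≤ log |x - c| := by
      intro x hx
      have htri : |y - c| ≤ |x - y| + |x - c| := by
        simpa [abs_sub_comm x y] using abs_sub_le y x c
      rw [← log_div hyc'.ne' two_ne_zero]
      exact log_le_log (by positivity) (by linarith [hR x hx])
    have hint := intervalIntegral.integral_mono_on hab.le intervalIntegrable_const
      (intervalIntegrable_log_abs_sub a b c) hpt
    have hlog2 : log 2 ≤ log (4 * R / (b - a)) :=
      log_le_log two_pos (by rw [le_div_iff₀ hh]; linarith)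
    rw [intervalIntegral.integral_const, smul_eq_mul] at hint
    exact le_trans (mul_le_mul_of_nonneg_left (by linarith) hh.le) hint
  · have hshift : ∫ x in a..b, log |x - c| = ∫ x in a - c..a - c + (b - a), log x := by
      rw [show a - c + (b - a) = b - c by ring, ← intervalIntegral.integral_comp_sub_right]
      simp only [log_abs]
    have hratio : log (4 * R / (b - a)) = log (2 * R) - log ((b - a) / 2) := by
      rw [← log_div (by positivity) (by positivity)]
      congr 1
      field_simp
      ring
    have hlog : log |y - c| ≤ log (2 * R) := log_le_log hyc' hnear
    rw [hshift]
    refine le_trans ?_ (mul_log_half_sub_one_le_integral_log (b - a) (a - c) hh.le)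
    rw [hratio]
    exact mul_le_mul_of_nonneg_left (by linarith) hh.le

theorem abs_sub_mul_le_exp_average_log_abs_sub {a b R y c : ℝ} (hab : a < b)
    (hR : ∀ x ∈ Icc a b, |x - y| ≤ R) :
    |y - c| * ((b - a) / (4 * R * exp 1)) ≤ exp ((b - a)⁻¹ * ∫ x in a..b, log |x - c|) := by
  rcases eq_or_ne y c with rfl | hyc
  · simpa using (exp_pos _).le
  have hh : 0 < b - a := sub_pos.2 hab
  have hR0 : 0 < R := by linarith [sub_le_two_mul_of_forall_abs_sub_le hab.le hR]
  calc |y - c| * ((b - a) / (4 * R * exp 1))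
      = exp (log |y - c| - log (4 * R / (b - a)) - 1) := by
        rw [exp_sub, exp_sub, exp_log (abs_pos.2 (sub_ne_zero.2 hyc)), exp_log (by positivity)]
        field_simp
    _ ≤ exp ((b - a)⁻¹ * ∫ x in a..b, log |x - c|) :=
        exp_le_exp.2 (log_abs_sub_sub_le_average_log_abs_sub hab hR hyc)

theorem integral_log_abs_prod_sub {ι : Type*} (s : Finset ι) (μ : ι → ℝ) (a b : ℝ) :
    ∫ x in a..b, log |∏ i ∈ s, (x - μ i)| = ∑ i ∈ s, ∫ x in a..b, log |x - μ i| := by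
  rw [← intervalIntegral.integral_finsetSum fun i _ => intervalIntegrable_log_abs_sub a b (μ i)]
  refine intervalIntegral.integral_congr_ae ?_
  have hne : ∀ᵐ x ∂volume, ∀ i ∈ s, x ≠ μ i :=
    (Filter.eventually_all_finset s).2 fun i _ => Measure.ae_ne volume (μ i)
  filter_upwards [hne] with x hx _
  rw [Finset.abs_prod, log_prod fun i hi => abs_ne_zero.2 (sub_ne_zero.2 (hx i hi))]

/-- For `p(x) = ∏ (x − μᵢ)` with `k'` roots, the geometric mean of `|p|` over
`I = [0.9√(2t), 1.1√(2t)]` is at least `2^(-Ck')` times `|p(y)|` for any `|y| ≤ √t`. -/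
theorem geometric_mean_lower_bound :
    ∃ C : ℝ, 0 < C ∧ ∀ (k' : ℕ) (μ : Fin k' → ℝ) (t : ℝ), 0 < t →
      ∀ y : ℝ, |y| ≤ Real.sqrt t →
        (2:ℝ) ^ (-(C * k')) * |∏ i, (y - μ i)| ≤
          Real.exp ((0.2 * Real.sqrt (2 * t))⁻¹ *
            ∫ x in Set.Icc (0.9 * Real.sqrt (2 * t)) (1.1 * Real.sqrt (2 * t)),
              Real.log |∏ i, (x - μ i)|) := by
  refine ⟨7, by norm_num, fun k' μ t ht y hy => ?_⟩
  set L := √(2 * t)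
  have hL : 0 < L := sqrt_pos.2 (by linarith)
  have hyL : |y| ≤ L := hy.trans (sqrt_le_sqrt (by linarith))
  have hR : ∀ x ∈ Icc (0.9 * L) (1.1 * L), |x - y| ≤ 2.1 * L := fun x hx => by
    rw [abs_le] at hyL ⊢
    constructor <;> linarith [hx.1, hx.2]
  have hlen : 1.1 * L - 0.9 * L = 0.2 * L := by ring
  have hfactor : (2:ℝ) ^ (-7:ℝ) ≤ 0.2 * L / (4 * (2.1 * L) * exp 1) := by
    rw [show (2:ℝ) ^ (-7:ℝ) = 1 / 128 by norm_num [rpow_neg], le_div_iff₀ (by positivity)]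
    nlinarith [exp_one_lt_d9]
  have hpow :
      (2:ℝ) ^ (-(7 * k' : ℝ)) * |∏ i, (y - μ i)| = ∏ i, (|y - μ i| * 2 ^ (-7:ℝ)) := by
    rw [Finset.prod_mul_distrib, Finset.prod_const, Finset.card_univ, Fintype.card_fin,
      ← rpow_natCast, ← rpow_mul (by norm_num), Finset.abs_prod, mul_comm]
    ring_nf
  rw [integral_Icc_eq_integral_Ioc, ← intervalIntegral.integral_of_le (by linarith),
    integral_log_abs_prod_sub, Finset.mul_sum, exp_sum, hpow]
  refine Finset.prod_le_prod (fun i _ => by positivity) fun i _ => ?_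
  calc |y - μ i| * 2 ^ (-7:ℝ) ≤ |y - μ i| * (0.2 * L / (4 * (2.1 * L) * exp 1)) := by gcongr
    _ ≤ _ := by
      simpa only [hlen] using
        abs_sub_mul_le_exp_average_log_abs_sub (c := μ i) (by linarith) hR
end

section
/- Let t be a sufficiently large integer and I = [−C√t, C√t] for a sufficiently large constant C. For every polynomial p of degree at most t with E_{x~N(0,1)}[p(x)] = 0, sup_{x∈I} |p(x)| ≤ 2^{O(t)}·‖p‖₁, where ‖p‖₁ = E_{x~N(0,1)}[|p(x)|]. -/
/-!
Cut `[a, b]` into `2n + 1` pieces of length `h` and, in every other piece, pick a point where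
`|p|` is at most its average over that piece. These `n + 1` nodes are `h`-separated, so the
Lagrange basis polynomials are bounded on `[a, b]` by `(2n + 1)^n / (i! (n - i)!)`, and
interpolation gives `sup_{[a,b]} |p| ≤ 2^{O(n)} / (b - a) · ∫_a^b |p|`. On `[-C√t, C√t]` the
Gaussian density is at least `e^{-C²t/2} / √(2π)`, so that integral costs only another factor
`2^{O(t)}` against `‖p‖₁`.
-/

open MeasureTheory ProbabilityTheory
open Finset Real Nat

lemma prod_erase_range_abs_sub {n i : ℕ} (hi : i ≤ n) :
    ∏ j ∈ (range (n + 1)).erase i, |(i : ℝ) - j| = i ! * (n - i)! := by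
  have hsplit : (range (n + 1)).erase i = range i ∪ Ico (i + 1) (n + 1) := by
    ext j; simp only [mem_erase, mem_range, mem_union, mem_Ico]; omega
  have hdisj : Disjoint (range i) (Ico (i + 1) (n + 1)) := by
    simp only [disjoint_left, mem_range, mem_Ico]; omega
  have below : ∏ j ∈ range i, |(i : ℝ) - j| = i ! := by
    rw [← prod_range_add_one_eq_factorial, cast_prod, ← prod_range_reflect]
    refine prod_congr rfl fun j hj => ?_
    have hj := mem_range.1 hj
    rw [abs_of_nonneg (by simp; omega), Nat.sub_sub, Nat.cast_sub (by omega : 1 + j ≤ i)]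
    push_cast
    ring
  have above : ∏ j ∈ Ico (i + 1) (n + 1), |(i : ℝ) - j| = (n - i)! := by
    rw [← prod_range_add_one_eq_factorial, cast_prod, prod_Ico_eq_prod_range,
      show n + 1 - (i + 1) = n - i by omega]
    refine prod_congr rfl fun j _ => ?_
    rw [abs_sub_comm, abs_of_nonneg (by push_cast; linarith)]
    push_cast
    ring
  rw [hsplit, prod_union hdisj, below, above]

lemma sum_range_inv_factorial_mul_factorial (n : ℕ) :
    ∑ i ∈ range (n + 1), ((i ! * (n - i)! : ℝ))⁻¹ = 2 ^ n / n ! := by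
  have hchoose : ∀ i ∈ range (n + 1), ((i ! * (n - i)! : ℝ))⁻¹ = n.choose i / n ! := by
    intro i hi
    rw [Nat.cast_choose ℝ (Nat.lt_succ_iff.1 (mem_range.1 hi))]
    field_simp
  rw [sum_congr rfl hchoose, ← sum_div, ← Nat.cast_sum, Nat.sum_range_choose]
  push_cast
  rfl

section Interpolation

variable {n : ℕ} {y : ℕ → ℝ} {h D x : ℝ}

lemma abs_eval_lagrange_basis_le (hh : 0 < h)
    (hsep : ∀ i ≤ n, ∀ j ≤ n, h * |(i : ℝ) - j| ≤ |y i - y j|)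
    (hx : ∀ j ≤ n, |x - y j| ≤ D) {i : ℕ} (hi : i ≤ n) :
    |(Lagrange.basis (range (n + 1)) y i).eval x| ≤ (D / h) ^ n / (i ! * (n - i)!) := by
  have hfactor : ∀ j ∈ (range (n + 1)).erase i,
      |(Lagrange.basisDivisor (y i) (y j)).eval x| ≤ D / h * |(i : ℝ) - j|⁻¹ := by
    intro j hj
    obtain ⟨hji, hj⟩ := mem_erase.1 hj
    have hj : j ≤ n := Nat.lt_succ_iff.1 (mem_range.1 hj)
    have hdist : 0 < |(i : ℝ) - j| := abs_pos.2 (sub_ne_zero.2 (by exact_mod_cast hji.symm))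
    simp only [Lagrange.basisDivisor, Polynomial.eval_mul, Polynomial.eval_C,
      Polynomial.eval_sub, Polynomial.eval_X]
    rw [abs_mul, abs_inv, inv_mul_eq_div,
      div_le_iff₀ ((mul_pos hh hdist).trans_le (hsep i hi j hj))]
    calc |x - y j| ≤ D := hx j hj
      _ = D / h * |(i : ℝ) - j|⁻¹ * (h * |(i : ℝ) - j|) := by field_simp
      _ ≤ D / h * |(i : ℝ) - j|⁻¹ * |y i - y j| := by
        have : 0 ≤ D := (abs_nonneg _).trans (hx j hj)
        gcongr
        exact hsep i hi j hj
  calc |(Lagrange.basis (range (n + 1)) y i).eval x|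
      ≤ ∏ j ∈ (range (n + 1)).erase i, D / h * |(i : ℝ) - j|⁻¹ := by
        rw [Lagrange.basis, Polynomial.eval_prod, abs_prod]
        exact prod_le_prod (fun _ _ => abs_nonneg _) hfactor
    _ = (D / h) ^ n / (i ! * (n - i)!) := by
        rw [prod_mul_distrib, prod_const, prod_inv_distrib, prod_erase_range_abs_sub hi,
          card_erase_of_mem (mem_range.2 (Nat.lt_succ_of_le hi)), card_range,
          Nat.add_one_sub_one, div_eq_mul_inv ((D / h) ^ n)]

lemma abs_eval_le_of_separated_nodes {p : Polynomial ℝ} (hp : p.natDegree ≤ n) (hh : 0 < h)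
    (hsep : ∀ i ≤ n, ∀ j ≤ n, h * |(i : ℝ) - j| ≤ |y i - y j|)
    (hx : ∀ j ≤ n, |x - y j| ≤ D) {M : ℝ} (hM : ∀ i ≤ n, |p.eval (y i)| ≤ M) :
    |p.eval x| ≤ M * ((D / h) ^ n * 2 ^ n / n !) := by
  have hinj : Set.InjOn y (range (n + 1)) := by
    intro i hi j hj hij
    have := hsep i (Nat.lt_succ_iff.1 (mem_range.1 hi)) j (Nat.lt_succ_iff.1 (mem_range.1 hj))
    rw [hij, sub_self, abs_zero, mul_nonpos_iff_pos_imp_nonpos, abs_nonpos_iff, sub_eq_zero] at this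
    exact_mod_cast this.1 hh
  have hdeg : p.degree < (range (n + 1)).card := by
    rw [card_range]
    exact Polynomial.degree_le_natDegree.trans_lt (by exact_mod_cast Nat.lt_succ_of_le hp)
  have hM0 : 0 ≤ M := (abs_nonneg _).trans (hM 0 n.zero_le)
  rw [Lagrange.eq_interpolate hinj hdeg, Lagrange.interpolate_apply, Polynomial.eval_finsetSum]
  calc _ ≤ ∑ i ∈ range (n + 1),
          |p.eval (y i)| * |(Lagrange.basis (range (n + 1)) y i).eval x| := by
        refine (abs_sum_le_sum_abs _ _).trans_eq (sum_congr rfl fun i _ => ?_)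
        rw [Polynomial.eval_mul, Polynomial.eval_C, abs_mul]
    _ ≤ ∑ i ∈ range (n + 1), M * ((D / h) ^ n / (i ! * (n - i)!)) := by
        refine sum_le_sum fun i hi => ?_
        have hi := Nat.lt_succ_iff.1 (mem_range.1 hi)
        exact mul_le_mul (hM i hi) (abs_eval_lagrange_basis_le hh hsep hx hi) (abs_nonneg _) hM0
    _ = M * ((D / h) ^ n * 2 ^ n / n !) := by
        rw [← mul_sum]
        simp_rw [div_eq_mul_inv ((D / h) ^ n)]
        rw [← mul_sum, sum_range_inv_factorial_mul_factorial]
        ring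

end Interpolation

lemma exists_mem_Icc_mul_le_setIntegral {f : ℝ → ℝ} {c h : ℝ} (hh : 0 < h)
    (hf : IntegrableOn f (Set.Icc c (c + h))) :
    ∃ z ∈ Set.Icc c (c + h), f z * h ≤ ∫ w in Set.Icc c (c + h), f w := by
  have hvol : volume.real (Set.Icc c (c + h)) = h := by
    rw [Real.volume_real_Icc_of_le (by linarith), add_sub_cancel_left]
  obtain ⟨z, hz, hle⟩ := exists_le_setAverage (by simp [hh]) (by simp) hf
  refine ⟨z, hz, ?_⟩
  rwa [setAverage_eq, hvol, smul_eq_mul, inv_mul_eq_div, le_div_iff₀ hh] at hle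

theorem abs_eval_mul_sub_le_setIntegral {p : Polynomial ℝ} {n : ℕ} (hp : p.natDegree ≤ n)
    {a b x : ℝ} (hx : x ∈ Set.Icc a b) :
    |p.eval x| * (b - a) ≤
      (2 * n + 1) ^ (n + 1) * 2 ^ n / n ! * ∫ y in Set.Icc a b, |p.eval y| := by
  set S := ∫ y in Set.Icc a b, |p.eval y|
  have hint : ∀ c d, IntegrableOn (fun y => |p.eval y|) (Set.Icc c d) :=
    fun c d => p.continuous.abs.integrableOn_Icc
  rcases (hx.1.trans hx.2).eq_or_lt with rfl | hab
  · rw [sub_self, mul_zero]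
    exact mul_nonneg (by positivity) (setIntegral_nonneg measurableSet_Icc fun _ _ => abs_nonneg _)
  set h := (b - a) / (2 * n + 1)
  have hh : 0 < h := div_pos (sub_pos.2 hab) (by positivity)
  have hb : b = a + (2 * n + 1) * h := by simp only [h]; field_simp; ring
  choose y hyJ hyS using fun i : ℕ =>
    exists_mem_Icc_mul_le_setIntegral hh (hint (a + 2 * i * h) (a + 2 * i * h + h))
  have hM : ∀ i ≤ n, |p.eval (y i)| ≤ S / h := by
    intro i hi
    have hi : (i : ℝ) ≤ n := by exact_mod_cast hi
    rw [le_div_iff₀ hh]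
    refine (hyS i).trans (setIntegral_mono_set (hint a b) (.of_forall fun _ => abs_nonneg _)
      (Set.Icc_subset_Icc ?_ ?_).eventuallyLE) <;> nlinarith
  have hsep : ∀ i ≤ n, ∀ j ≤ n, h * |(i : ℝ) - j| ≤ |y i - y j| := by
    intro i hi j hj
    wlog hij : i ≤ j generalizing i j
    · rw [abs_sub_comm, abs_sub_comm (y i)]
      exact this j hj i hi (le_of_not_ge hij)
    rcases hij.eq_or_lt with rfl | hlt
    · simp
    have hlt : (i : ℝ) + 1 ≤ j := by exact_mod_cast hlt
    rw [abs_of_nonpos (by linarith), abs_sub_comm]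
    refine le_abs.2 (Or.inl ?_)
    nlinarith [(hyJ i).2, (hyJ j).1]
  have hxy : ∀ j ≤ n, |x - y j| ≤ (2 * n + 1) * h := by
    intro j hj
    have hj : (j : ℝ) ≤ n := by exact_mod_cast hj
    rw [abs_le]
    constructor <;> nlinarith [(hyJ j).1, (hyJ j).2, hx.1, hx.2]
  have key := abs_eval_le_of_separated_nodes hp hh hsep hxy hM
  rw [mul_div_cancel_right₀ _ hh.ne'] at key
  calc |p.eval x| * (b - a) ≤ S / h * ((2 * n + 1) ^ n * 2 ^ n / n !) * ((2 * n + 1) * h) := by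
        rw [hb, add_sub_cancel_left]
        gcongr
    _ = (2 * n + 1) ^ (n + 1) * 2 ^ n / n ! * S := by
        field_simp
        ring

lemma odd_pow_mul_two_pow_div_factorial_le_exp (n : ℕ) :
    (2 * n + 1) ^ (n + 1) * 2 ^ n / n ! ≤ exp (5 * n + 1) := by
  have h2n : (2 * n + 1 : ℝ) ≤ exp (2 * n) := by linarith [add_one_le_exp (2 * n : ℝ)]
  have htwo : (2 : ℝ) ^ n ≤ exp n := by
    rw [← exp_one_pow]
    gcongr
    linarith [add_one_le_exp (1 : ℝ)]
  calc (2 * n + 1 : ℝ) ^ (n + 1) * 2 ^ n / n !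
      = (2 * n + 1) * 2 ^ n * ((2 * n + 1) ^ n / n !) := by ring
    _ ≤ exp (2 * n) * exp n * exp (2 * n + 1) := by
        gcongr
        exact pow_div_factorial_le_exp _ (by positivity) n
    _ = exp (5 * n + 1) := by rw [← exp_add, ← exp_add]; ring_nf

lemma Polynomial.integrable_eval_gaussianReal (p : Polynomial ℝ) (μ : ℝ) (v : NNReal) :
    Integrable (fun x => p.eval x) (gaussianReal μ v) := by
  have hmono : ∀ k : ℕ, Integrable (fun x : ℝ => x ^ k) (gaussianReal μ v) := fun k =>
    ((memLp_id_gaussianReal k).integrable_norm_pow').mono' (by fun_prop)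
      (.of_forall fun x => by simp [norm_pow])
  simp_rw [p.eval_eq_sum_range]
  exact integrable_finsetSum _ fun i _ => (hmono i).const_mul _

lemma ofReal_le_gaussianPDF {A x : ℝ} (hx : x ∈ Set.Icc (-A) A) :
    ENNReal.ofReal (exp (-A ^ 2 / 2) / √(2 * π)) ≤ gaussianPDF 0 1 x := by
  rw [gaussianPDF, gaussianPDFReal]
  refine ENNReal.ofReal_le_ofReal ?_
  have hx2 : x ^ 2 ≤ A ^ 2 := sq_le_sq' hx.1 hx.2
  rw [div_eq_inv_mul]
  simp only [NNReal.coe_one, mul_one, sub_zero]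
  gcongr

lemma smul_volume_restrict_Icc_le_gaussianReal (A : ℝ) :
    ENNReal.ofReal (exp (-A ^ 2 / 2) / √(2 * π)) • volume.restrict (Set.Icc (-A) A) ≤
      gaussianReal 0 1 := by
  rw [gaussianReal_of_var_ne_zero 0 one_ne_zero, ← withDensity_const,
    ← withDensity_indicator measurableSet_Icc]
  refine withDensity_mono (.of_forall fun x => ?_)
  by_cases hx : x ∈ Set.Icc (-A) A
  · rw [Set.indicator_of_mem hx]
    exact ofReal_le_gaussianPDF hx
  · rw [Set.indicator_of_notMem hx]
    exact bot_le

lemma setIntegral_Icc_le_integral_gaussianReal {f : ℝ → ℝ} (hf : 0 ≤ f)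
    (hfi : Integrable f (gaussianReal 0 1)) (A : ℝ) :
    ∫ x in Set.Icc (-A) A, f x ≤ √(2 * π) * exp (A ^ 2 / 2) * ∫ x, f x ∂gaussianReal 0 1 := by
  have hc : 0 < exp (-A ^ 2 / 2) / √(2 * π) := by positivity
  have hle := integral_mono_measure (smul_volume_restrict_Icc_le_gaussianReal A)
    (.of_forall hf) hfi
  rw [integral_smul_measure, ENNReal.toReal_ofReal hc.le, smul_eq_mul] at hle
  calc ∫ x in Set.Icc (-A) A, f x
      = √(2 * π) * exp (A ^ 2 / 2) *
          (exp (-A ^ 2 / 2) / √(2 * π) * ∫ x in Set.Icc (-A) A, f x) := by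
        rw [neg_div, exp_neg]
        field_simp
    _ ≤ √(2 * π) * exp (A ^ 2 / 2) * ∫ x, f x ∂gaussianReal 0 1 := by gcongr

/-- For sufficiently large interval constant `C` and sufficiently large `t`, every
mean-zero polynomial of degree `≤ t` satisfies
`sup_{x ∈ [-C√t, C√t]} |p(x)| ≤ 2^{O(t)} ‖p‖₁`. -/
theorem sup_upper_bound_on_interval :
    ∃ C₀ : ℝ, 0 < C₀ ∧ ∀ C : ℝ, C₀ ≤ C → ∃ K T : ℝ, 0 < K ∧
      ∀ t : ℕ, T ≤ t → ∀ p : Polynomial ℝ, p.natDegree ≤ t →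
        (∫ x, p.eval x ∂(gaussianReal 0 1)) = 0 →
        ∀ x ∈ Set.Icc (-(C * Real.sqrt t)) (C * Real.sqrt t),
          |p.eval x| ≤ (2:ℝ) ^ (K * t) * ∫ y, |p.eval y| ∂(gaussianReal 0 1) := by
  refine ⟨1, one_pos, fun C hC => ⟨C ^ 2 + 14, 1, by positivity, ?_⟩⟩
  intro t ht p hp _ x hx
  set A := C * √t
  set G := ∫ y, |p.eval y| ∂gaussianReal 0 1
  have hA : 1 ≤ A := one_le_mul_of_one_le_of_one_le hC (one_le_sqrt.2 ht)
  have hA2 : A ^ 2 = C ^ 2 * t := by rw [mul_pow, sq_sqrt (by positivity)]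
  have hG : 0 ≤ G := integral_nonneg fun _ => abs_nonneg _
  have hsqrt : √(2 * π) ≤ 2 * A * exp 1 := by
    have : √(2 * π) ≤ 4 := sqrt_le_iff.2 ⟨by norm_num, by nlinarith [pi_le_four]⟩
    nlinarith [add_one_le_exp (1 : ℝ)]
  have hlocal := (abs_eval_mul_sub_le_setIntegral hp hx).trans
    (mul_le_mul (odd_pow_mul_two_pow_div_factorial_le_exp t)
      (setIntegral_Icc_le_integral_gaussianReal (fun y => abs_nonneg (p.eval y))
        (p.integrable_eval_gaussianReal 0 1).abs A) (by positivity) (by positivity))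
  refine le_of_mul_le_mul_left ?_ (by positivity : 0 < 2 * A)
  calc 2 * A * |p.eval x| = |p.eval x| * (A - -A) := by ring
    _ ≤ exp (5 * t + 1) * (√(2 * π) * exp (A ^ 2 / 2) * G) := hlocal
    _ ≤ exp (5 * t + 1) * (2 * A * exp 1 * exp (A ^ 2 / 2) * G) := by gcongr
    _ = 2 * A * (exp (5 * t + 1 + 1 + A ^ 2 / 2) * G) := by
        simp only [exp_add]
        ring
    _ ≤ 2 * A * (2 ^ ((C ^ 2 + 14) * t) * G) := by
        rw [rpow_def_of_pos two_pos]
        gcongr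
        nlinarith [log_two_gt_d9, sq_nonneg C]
end
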